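/- Let p, q : ℝ^d → ℝ be differentiable at x ∈ ℝ^d with p(x) > 0 and q(x) > 0. Define c*(y) = p(y)/(p(y)+q(y)) and logit(u) = log(u/(1−u)). Then the function y ↦ logit(1 − c*(y)) is differentiable at x and its gradient satisfies ∇[logit(1 − c*)](x) = ∇(log q)(x) − ∇(log p)(x), i.e., the gradient of the logit of the optimal-classifier output equals the score difference between q and p at x. -/

import Mathlib

open Real Filter Topology

noncomputable def logit (u : ℝ) : ℝ := Real.log (u / (1 - u))

theorem logit_one_sub_div_add {a b : ℝ} (ha : 0 < a) (hb : 0 < b) :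
    logit (1 - a / (a + b)) = Real.log b - Real.log a := by
  have hab : a + b ≠ 0 := by positivity
  have hodds : (1 - a / (a + b)) / (1 - (1 - a / (a + b))) = b / a := by
    field_simp [ha.ne']
    ring
  rw [logit, hodds, Real.log_div hb.ne' ha.ne']

theorem logit_one_sub_div_add_eventuallyEq {X : Type*} [TopologicalSpace X] {p q : X → ℝ} {x : X}
    (hp : ContinuousAt p x) (hq : ContinuousAt q x) (hp_pos : 0 < p x) (hq_pos : 0 < q x) :
    (fun y => logit (1 - p y / (p y + q y))) =ᶠ[𝓝 x] fun y => Real.log (q y) - Real.log (p y) := by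
  filter_upwards [hp.eventually (lt_mem_nhds hp_pos), hq.eventually (lt_mem_nhds hq_pos)]
    with y hpy hqy
  exact logit_one_sub_div_add hpy hqy

section Gradient

variable {𝕜 F : Type*} [RCLike 𝕜] [NormedAddCommGroup F] [InnerProductSpace 𝕜 F] [CompleteSpace F]
  {f g : F → 𝕜} {f' g' x : F}

theorem HasGradientAt.sub (hf : HasGradientAt f f' x) (hg : HasGradientAt g g' x) :
    HasGradientAt (fun y => f y - g y) (f' - g') x := by
  rw [hasGradientAt_iff_hasFDerivAt, map_sub]
  exact (hasGradientAt_iff_hasFDerivAt.mp hf).sub (hasGradientAt_iff_hasFDerivAt.mp hg)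

theorem gradient_sub (hf : DifferentiableAt 𝕜 f x) (hg : DifferentiableAt 𝕜 g x) :
    gradient (fun y => f y - g y) x = gradient f x - gradient g x :=
  (hf.hasGradientAt.sub hg.hasGradientAt).gradient

end Gradient

/-- The central identity of DiffRatio: the gradient of the logit of the optimal
classifier output `c*(y) = p(y)/(p(y)+q(y))` equals the score difference
`∇ log q − ∇ log p` at any point where `p` and `q` are differentiable and positive. -/
theorem gradient_logit_eq_score_difference {d : ℕ} (p q : EuclideanSpace ℝ (Fin d) → ℝ)
    (x : EuclideanSpace ℝ (Fin d))
    (hp_diff : DifferentiableAt ℝ p x) (hq_diff : DifferentiableAt ℝ q x)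
    (hp_pos : 0 < p x) (hq_pos : 0 < q x) :
    DifferentiableAt ℝ (fun y => logit (1 - p y / (p y + q y))) x ∧
      gradient (fun y => logit (1 - p y / (p y + q y))) x =
        gradient (fun y => Real.log (q y)) x - gradient (fun y => Real.log (p y)) x := by
  have hlogit := logit_one_sub_div_add_eventuallyEq hp_diff.continuousAt hq_diff.continuousAt
    hp_pos hq_pos
  have hlog_q := hq_diff.log hq_pos.ne'
  have hlog_p := hp_diff.log hp_pos.ne'
  exact ⟨hlogit.differentiableAt_iff.mpr (hlog_q.sub hlog_p),
    hlogit.gradient_eq.trans (gradient_sub hlog_q hlog_p)⟩
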